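/- Let k ≥ 1 be an integer. The equation d_2(λ) = 2·x_1(λ)^k/(1 − x_1(λ)^{k+1}) has exactly one root ρ_k in the interval (√(2+√5), ∞). Moreover, for every integer r ≥ 2, the spectral radius of the tree T_{(k−1,k,...,k,k−1)} (the parameter sequence has r entries, with first and last entries k−1 and all middle entries k; this tree lies in P_{n,e} with e = r + 4 and n = r(k+2) + 6) equals ρ_k; in particular the spectral radius does not depend on r. -/

import Mathlib

open Finset
open scoped Classical

/-- Adjacency matrix of a simple graph over `ℝ`. -/
noncomputable def adjM {V : Type*} [Fintype V] (G : SimpleGraph V) : Matrix V V ℝ :=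
  fun a b => if G.Adj a b then 1 else 0

/-- Spectral radius: the largest eigenvalue of the adjacency matrix. -/
noncomputable def specRad {V : Type*} [Fintype V] (G : SimpleGraph V) : ℝ :=
  sSup {t : ℝ | ∃ f : V → ℝ, f ≠ 0 ∧ (adjM G).mulVec f = t • f}

/-- Characteristic polynomial of the adjacency matrix, as a function `φ_G(λ) = det(λI − A)`. -/
noncomputable def phi {V : Type*} [Fintype V] [DecidableEq V] (G : SimpleGraph V) (l : ℝ) : ℝ :=
  (l • (1 : Matrix V V ℝ) - adjM G).det

/-- `G` is connected with diameter exactly `D`. -/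
def hasDiam {V : Type*} (G : SimpleGraph V) (D : ℕ) : Prop :=
  G.Connected ∧ (∀ u v : V, G.dist u v ≤ D) ∧ ∃ u v : V, G.dist u v = D

/-- `G` is a minimizer graph among connected graphs on `n` vertices with diameter `D`. -/
def IsMinimizer (n D : ℕ) (G : SimpleGraph (Fin n)) : Prop :=
  hasDiam G D ∧ ∀ H : SimpleGraph (Fin n), hasDiam H D → specRad G ≤ specRad H

noncomputable def x1 (l : ℝ) : ℝ := (l - Real.sqrt (l ^ 2 - 4)) / 2
noncomputable def x2 (l : ℝ) : ℝ := (l + Real.sqrt (l ^ 2 - 4)) / 2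
noncomputable def d1f (l : ℝ) : ℝ := l - x1 l ^ 3
noncomputable def d2f (l : ℝ) : ℝ := x2 l ^ 3 - l

/-- Deletion of a vertex from a graph. -/
def delVert {V : Type*} (G : SimpleGraph V) (v : V) : SimpleGraph {u : V // u ≠ v} :=
  SimpleGraph.comap Subtype.val G

noncomputable def pfun {V : Type*} [Fintype V] [DecidableEq V] (G : SimpleGraph V) (v : V)
    (l : ℝ) : ℝ :=
  (phi (delVert G v) l - x1 l * phi G l) / (x2 l - x1 l)

noncomputable def qfun {V : Type*} [Fintype V] [DecidableEq V] (G : SimpleGraph V) (v : V)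
    (l : ℝ) : ℝ :=
  (x2 l * phi G l - phi (delVert G v) l) / (x2 l - x1 l)

/-- The tree `T_{(k_1,…,k_{e−4})}` on `n` vertices: a main path `0 ∼ 1 ∼ ⋯ ∼ (n−e)`,
with a pendant path of 2 vertices attached at `m_1 = 2` and at `m_{e−3} = n−e−2`,
and a single pendant vertex attached at each of `m_2, …, m_{e−4}`, where
`m_{i+1} = m_i + k_i + 1` (here `ks` is 0-indexed: `ks (i-1) = k_i`). -/
def treeT (n e : ℕ) (ks : ℕ → ℕ) :
    SimpleGraph (Fin (n - e + 1) ⊕ Fin 2 ⊕ Fin 2 ⊕ Fin (e - 5)) :=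
  SimpleGraph.fromRel (fun a b =>
    match a, b with
    | Sum.inl a, Sum.inl b => (a : ℕ) + 1 = (b : ℕ)
    | Sum.inl a, Sum.inr (Sum.inl w) => (a : ℕ) = 2 ∧ (w : ℕ) = 0
    | Sum.inr (Sum.inl w), Sum.inr (Sum.inl w') => (w : ℕ) = 0 ∧ (w' : ℕ) = 1
    | Sum.inl a, Sum.inr (Sum.inr (Sum.inl w)) => (a : ℕ) = n - e - 2 ∧ (w : ℕ) = 0
    | Sum.inr (Sum.inr (Sum.inl w)), Sum.inr (Sum.inr (Sum.inl w')) =>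
        (w : ℕ) = 0 ∧ (w' : ℕ) = 1
    | Sum.inl a, Sum.inr (Sum.inr (Sum.inr j)) =>
        (a : ℕ) = 2 + ∑ t ∈ Finset.range ((j : ℕ) + 1), (ks t + 1)
    | _, _ => False)

/-!
Write `x = x₁(ρ)`, so that `ρ = x + 1/x`; the root equation is equivalent to
`(ρ² − 1)(1 + x^(k+1)) = 2ρ(x + x^k)`. On the main path put `x^d + x^(k+1-d)`, where `d` is the
distance, modulo `k + 1`, past the last leaf attachment point. This satisfies
`ρ f(i) = f(i−1) + f(i+1)` except at the attachment points, where by the identity above the defect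
is exactly the value `(1 + x^(k+1))/ρ` put on the leaf. At each end, the pendant `P₂` and the first
two path vertices get the values `(1 + x^(k+1))/2` and `(1 + x^(k+1))/(2ρ)`, which closes up by the
same identity. A positive eigenvector of a symmetric nonnegative matrix belongs to its largest
eigenvalue, so `ρ` is the spectral radius. The root itself exists by the intermediate value
theorem, and is unique because `d₂` increases and the right-hand side decreases in `λ`.
-/

open Matrix

section Spectral
variable {V : Type*} [Fintype V]

lemma abs_mulVec_le {A : Matrix V V ℝ} (hA : ∀ i j, 0 ≤ A i j) (g : V → ℝ) (v : V) :
    |(A *ᵥ g) v| ≤ (A *ᵥ fun u => |g u|) v := by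
  simp only [Matrix.mulVec, dotProduct]
  refine (Finset.abs_sum_le_sum_abs _ _).trans_eq (Finset.sum_congr rfl fun u _ => ?_)
  rw [abs_mul, abs_of_nonneg (hA v u)]

theorem le_of_mulVec_eq_smul_of_pos {A : Matrix V V ℝ} (hA : A.IsSymm) (hnn : ∀ i j, 0 ≤ A i j)
    {f : V → ℝ} (hf : ∀ v, 0 < f v) {lam : ℝ} (hAf : A *ᵥ f = lam • f)
    {t : ℝ} {g : V → ℝ} (hg : g ≠ 0) (hAg : A *ᵥ g = t • g) : t ≤ lam := by
  set a : V → ℝ := fun u => |g u|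
  have hpos : 0 < f ⬝ᵥ a := by
    obtain ⟨v, hv⟩ := Function.ne_iff.1 hg
    exact Finset.sum_pos' (fun u _ => mul_nonneg (hf u).le (abs_nonneg _))
      ⟨v, mem_univ _, mul_pos (hf v) (abs_pos.2 hv)⟩
  have hle : t • a ≤ A *ᵥ a := fun v =>
    calc t * |g v| ≤ |t * g v| := by
          rw [abs_mul]; exact mul_le_mul_of_nonneg_right (le_abs_self t) (abs_nonneg _)
      _ = |(A *ᵥ g) v| := by rw [hAg]; rfl
      _ ≤ (A *ᵥ a) v := abs_mulVec_le hnn g v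
  have key : t * (f ⬝ᵥ a) ≤ lam * (f ⬝ᵥ a) :=
    calc t * (f ⬝ᵥ a) = f ⬝ᵥ (t • a) := by rw [dotProduct_smul, smul_eq_mul]
      _ ≤ f ⬝ᵥ (A *ᵥ a) := dotProduct_le_dotProduct_of_nonneg_left hle fun v => (hf v).le
      _ = (A *ᵥ f) ⬝ᵥ a := by rw [Matrix.dotProduct_mulVec, ← Matrix.mulVec_transpose, hA.eq]
      _ = lam * (f ⬝ᵥ a) := by rw [hAf, smul_dotProduct, smul_eq_mul]
  exact le_of_mul_le_mul_right key hpos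

lemma adjM_isSymm (G : SimpleGraph V) : (adjM G).IsSymm :=
  Matrix.IsSymm.ext fun i j => by simp only [adjM, G.adj_comm]

lemma adjM_nonneg (G : SimpleGraph V) (i j : V) : 0 ≤ adjM G i j := by
  unfold adjM; split_ifs <;> norm_num

lemma adjM_mulVec_apply (G : SimpleGraph V) (g : V → ℝ) (v : V) :
    (adjM G *ᵥ g) v = ∑ u, if G.Adj v u then g u else 0 := by
  simp [adjM, Matrix.mulVec, dotProduct, ite_mul]

theorem specRad_eq_of_pos_eigenvector [Nonempty V] (G : SimpleGraph V) {f : V → ℝ}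
    (hf : ∀ v, 0 < f v) {lam : ℝ} (hAf : adjM G *ᵥ f = lam • f) : specRad G = lam := by
  have hf0 : f ≠ 0 := fun h => (hf (Classical.arbitrary V)).ne' (congrFun h _)
  refine IsGreatest.csSup_eq ⟨⟨f, hf0, hAf⟩, ?_⟩
  rintro t ⟨g, hg, hAg⟩
  exact le_of_mulVec_eq_smul_of_pos (adjM_isSymm G) (adjM_nonneg G) hf hAf hg hAg

end Spectral

lemma x1_add_x2 (l : ℝ) : x1 l + x2 l = l := by
  unfold x1 x2; ring

lemma x1_mul_x2 {l : ℝ} (hl : 2 ≤ l) : x1 l * x2 l = 1 := by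
  have hs : Real.sqrt (l ^ 2 - 4) ^ 2 = l ^ 2 - 4 := Real.sq_sqrt (by nlinarith)
  unfold x1 x2
  linear_combination (-1 / 4 : ℝ) * hs

lemma x1_pos {l : ℝ} (hl : 2 < l) : 0 < x1 l := by
  have : Real.sqrt (l ^ 2 - 4) < l := (Real.sqrt_lt' (by linarith)).2 (by linarith)
  unfold x1; linarith

lemma one_lt_x2 {l : ℝ} (hl : 2 < l) : 1 < x2 l := by
  have := Real.sqrt_nonneg (l ^ 2 - 4)
  unfold x2; linarith

lemma x1_lt_one {l : ℝ} (hl : 2 < l) : x1 l < 1 := by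
  have h := x1_mul_x2 hl.le
  nlinarith [x1_pos hl, one_lt_x2 hl]

lemma x2_strictMonoOn : StrictMonoOn x2 (Set.Ici 2) := by
  intro a ha b hb hab
  have : Real.sqrt (a ^ 2 - 4) ≤ Real.sqrt (b ^ 2 - 4) :=
    Real.sqrt_le_sqrt (by nlinarith [Set.mem_Ici.1 ha])
  unfold x2; linarith

lemma x1_strictAntiOn : StrictAntiOn x1 (Set.Ioi 2) := by
  intro a ha b hb hab
  have ha' : (2 : ℝ) < a := ha
  have hb' : (2 : ℝ) < b := hb
  have h2 := mul_lt_mul_of_pos_left (x2_strictMonoOn ha'.le hb'.le hab) (x1_pos hb')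
  nlinarith [x1_mul_x2 ha'.le, x1_mul_x2 hb'.le, one_lt_x2 ha']

lemma d2f_strictMonoOn : StrictMonoOn d2f (Set.Ioi 2) := by
  intro a ha b hb hab
  have ha' : (2 : ℝ) < a := ha
  have hb' : (2 : ℝ) < b := hb
  have h2 := x2_strictMonoOn ha'.le hb'.le hab
  have h1 := x1_strictAntiOn ha hb hab
  have hcube : x2 a ^ 3 - x2 a < x2 b ^ 3 - x2 b := by
    have : 0 < (x2 b - x2 a) * (x2 b ^ 2 + x2 a * x2 b + x2 a ^ 2 - 1) := by
      apply mul_pos (sub_pos.2 h2)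
      nlinarith [one_lt_x2 ha', one_lt_x2 hb']
    linarith
  unfold d2f
  linarith [x1_add_x2 a, x1_add_x2 b]

noncomputable def rootRhs (k : ℕ) (l : ℝ) : ℝ := 2 * x1 l ^ k / (1 - x1 l ^ (k + 1))

lemma one_sub_x1_pow_pos {l : ℝ} (hl : 2 < l) (k : ℕ) : 0 < 1 - x1 l ^ (k + 1) :=
  sub_pos.2 (pow_lt_one₀ (x1_pos hl).le (x1_lt_one hl) (Nat.succ_ne_zero k))

lemma rootRhs_strictAntiOn (k : ℕ) : StrictAntiOn (rootRhs k) (Set.Ioi 2) := by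
  intro a ha b hb hab
  have ha' : (2 : ℝ) < a := ha
  have hb' : (2 : ℝ) < b := hb
  have hx := x1_strictAntiOn ha hb hab
  have hxb := x1_pos hb'
  have hk : x1 b ^ k ≤ x1 a ^ k := pow_le_pow_left₀ hxb.le hx.le k
  have hk1 : x1 b ^ (k + 1) < x1 a ^ (k + 1) := pow_lt_pow_left₀ hx hxb.le k.succ_ne_zero
  have hda := one_sub_x1_pow_pos ha' k
  unfold rootRhs
  rw [div_lt_div_iff₀ (one_sub_x1_pow_pos hb' k) hda]
  nlinarith [pow_pos hxb k]

lemma continuousOn_rootRhs (k : ℕ) : ContinuousOn (rootRhs k) (Set.Ioi 2) := by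
  have hx1 : Continuous x1 := by unfold x1; fun_prop
  refine ContinuousOn.div (by fun_prop) (by fun_prop) fun l hl => ?_
  exact (one_sub_x1_pow_pos hl k).ne'

lemma two_lt_sqrt_two_add_sqrt_five : 2 < Real.sqrt (2 + Real.sqrt 5) := by
  have h5 : 2 < Real.sqrt 5 := Real.lt_sqrt_of_sq_lt (by norm_num)
  exact Real.lt_sqrt_of_sq_lt (by linarith)

/-- At `l = √(2+√5)` one has `x₂² = (1+√5)/2`, a root of `y² = y + 1`, so `x₂³ = x₂ + x₁ = l`. -/
lemma d2f_sqrt_two_add_sqrt_five : d2f (Real.sqrt (2 + Real.sqrt 5)) = 0 := by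
  set l := Real.sqrt (2 + Real.sqrt 5)
  have hl := two_lt_sqrt_two_add_sqrt_five
  have h5 : Real.sqrt 5 ^ 2 = 5 := Real.sq_sqrt (by norm_num)
  have hl2 : l ^ 2 = 2 + Real.sqrt 5 := Real.sq_sqrt (by positivity)
  set s := Real.sqrt (l ^ 2 - 4)
  have hs2 : s ^ 2 = l ^ 2 - 4 := Real.sq_sqrt (by nlinarith)
  have hls : l * s = 1 := by
    have : (l * s) ^ 2 = 1 := by rw [mul_pow, hl2, hs2, hl2]; linear_combination h5
    have : 0 ≤ l * s := mul_nonneg (Real.sqrt_nonneg _) (Real.sqrt_nonneg _)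
    nlinarith
  have hx2 : x2 l ^ 2 = (1 + Real.sqrt 5) / 2 := by
    unfold x2; linear_combination (1 / 4 : ℝ) * hs2 + (1 / 2 : ℝ) * hls + (1 / 2 : ℝ) * hl2
  have hx2pos : 0 < x2 l := by linarith [one_lt_x2 hl]
  have hsum : x1 l + x2 l = l := x1_add_x2 l
  have hprod : x1 l * x2 l = 1 := x1_mul_x2 hl.le
  refine (mul_eq_zero.1 (?_ : x2 l * d2f l = 0)).resolve_left hx2pos.ne'
  unfold d2f
  linear_combination (x2 l ^ 2 + (1 + Real.sqrt 5) / 2 - 1) * hx2 + (1 / 4 : ℝ) * h5 - hprod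
    + x2 l * hsum

lemma rootRhs_lt_d2f_three (k : ℕ) : rootRhs k 3 < d2f 3 := by
  have h3 : (2 : ℝ) < 3 := by norm_num
  have hx2 : 5 / 2 < x2 3 := by
    have : 2 < Real.sqrt 5 := Real.lt_sqrt_of_sq_lt (by norm_num)
    unfold x2; norm_num; linarith
  have hx1 : x1 3 < 2 / 5 := by nlinarith [x1_mul_x2 h3.le, x1_pos h3]
  have hk : x1 3 ^ k ≤ 1 := pow_le_one₀ (x1_pos h3).le (x1_lt_one h3).le
  have hk1 : x1 3 ^ (k + 1) ≤ x1 3 :=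
    pow_le_of_le_one (x1_pos h3).le (x1_lt_one h3).le k.succ_ne_zero
  have hrhs : rootRhs k 3 ≤ 10 / 3 := by
    unfold rootRhs
    rw [div_le_iff₀ (one_sub_x1_pow_pos h3 k)]
    linarith
  have hd2 : 101 / 8 < d2f 3 := by
    have := pow_lt_pow_left₀ hx2 (by norm_num) (by norm_num : 3 ≠ 0)
    unfold d2f; linarith
  linarith

lemma d2f_sub_rootRhs_strictMonoOn (k : ℕ) :
    StrictMonoOn (fun l => d2f l - rootRhs k l) (Set.Ioi 2) :=
  fun _ ha _ hb hab => sub_lt_sub (d2f_strictMonoOn ha hb hab) (rootRhs_strictAntiOn k ha hb hab)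

lemma exists_d2f_eq_rootRhs (k : ℕ) :
    ∃ ρ, Real.sqrt (2 + Real.sqrt 5) < ρ ∧ d2f ρ = rootRhs k ρ := by
  set l₀ := Real.sqrt (2 + Real.sqrt 5)
  have hl₀ : 2 < l₀ := two_lt_sqrt_two_add_sqrt_five
  have hl₀3 : l₀ < 3 := by
    have : Real.sqrt 5 < 3 := (Real.sqrt_lt' (by norm_num)).2 (by norm_num)
    exact (Real.sqrt_lt' (by norm_num)).2 (by linarith)
  have hcont : ContinuousOn (fun l => d2f l - rootRhs k l) (Set.Icc l₀ 3) := by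
    have : Continuous d2f := by unfold d2f x2; fun_prop
    exact (this.continuousOn.sub (continuousOn_rootRhs k)).mono
      fun l hl => lt_of_lt_of_le hl₀ hl.1
  have hlow : d2f l₀ - rootRhs k l₀ < 0 := by
    have : 0 < rootRhs k l₀ :=
      div_pos (by have := x1_pos hl₀; positivity) (one_sub_x1_pow_pos hl₀ k)
    rw [d2f_sqrt_two_add_sqrt_five]; linarith
  have hhigh : 0 < d2f 3 - rootRhs k 3 := sub_pos.2 (rootRhs_lt_d2f_three k)
  obtain ⟨ρ, hρ, hρ0⟩ := intermediate_value_Ioo hl₀3.le hcont ⟨hlow, hhigh⟩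
  exact ⟨ρ, hρ.1, sub_eq_zero.1 hρ0⟩

lemma mul_x1 {l : ℝ} (hl : 2 ≤ l) : l * x1 l = x1 l ^ 2 + 1 := by
  linear_combination (-x1 l) * x1_add_x2 l + x1_mul_x2 hl

/-- Multiplying the root equation by `x₁³` turns it into the identity
`(1 − x² − x⁴)(1 − x^(k+1)) = 2x^(k+3)` in `x = x₁(ρ)`, which is `x²` times the claim. -/
lemma sq_sub_one_mul_eq_of_d2f_eq_rootRhs {k : ℕ} {ρ : ℝ} (hρ : 2 < ρ)
    (h : d2f ρ = rootRhs k ρ) :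
    (ρ ^ 2 - 1) * (1 + x1 ρ ^ (k + 1)) = 2 * ρ * (x1 ρ + x1 ρ ^ k) := by
  set x := x1 ρ
  have hx : 0 < x := x1_pos hρ
  have hρx : ρ * x = x ^ 2 + 1 := mul_x1 hρ.le
  have hprod : x * x2 ρ = 1 := x1_mul_x2 hρ.le
  have hd2 : x ^ 3 * d2f ρ = 1 - x ^ 2 - x ^ 4 := by
    unfold d2f
    linear_combination (x ^ 2 * x2 ρ ^ 2 + x * x2 ρ + 1) * hprod - x ^ 2 * hρx
  rw [rootRhs, eq_div_iff (one_sub_x1_pow_pos hρ k).ne'] at h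
  refine mul_left_cancel₀ (pow_ne_zero 2 hx.ne') ?_
  linear_combination ((1 + x ^ (k + 1)) * (ρ * x + x ^ 2 + 1) - 2 * x * (x + x ^ k)) * hρx
    - (1 - x ^ (k + 1)) * hd2 + x ^ 3 * h

section Profile
variable (x : ℝ) (k : ℕ)

def profile (d : ℕ) : ℝ := x ^ d + x ^ (k + 1 - d)

-- `(i + k) % (k + 1)` is `(i - 1) % (k + 1)`, without the truncated subtraction at `i = 0`.
def periodicProfile (i : ℕ) : ℝ := profile x k ((i + k) % (k + 1))

lemma profile_zero : profile x k 0 = 1 + x ^ (k + 1) := by simp [profile]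

lemma profile_succ_self : profile x k (k + 1) = 1 + x ^ (k + 1) := by simp [profile, add_comm]

lemma profile_self : profile x k k = x + x ^ k := by simp [profile, add_comm]

lemma profile_one : profile x k 1 = x + x ^ k := by simp [profile]

variable {x k}

lemma profile_pred_add_profile_succ {ρ : ℝ} (hρx : ρ * x = x ^ 2 + 1) {c : ℕ} (hc0 : 0 < c)
    (hck : c ≤ k) : profile x k (c - 1) + profile x k (c + 1) = ρ * profile x k c := by
  obtain ⟨d, rfl⟩ : ∃ d, c = d + 1 := ⟨c - 1, by omega⟩
  obtain ⟨w, rfl⟩ : ∃ w, k = d + 1 + w := ⟨k - (d + 1), by omega⟩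
  simp only [profile, Nat.add_sub_cancel, show d + 1 + w + 1 - d = w + 2 by omega,
    show d + 1 + w + 1 - (d + 1 + 1) = w by omega, show d + 1 + w + 1 - (d + 1) = w + 1 by omega]
  linear_combination (-(x ^ d + x ^ w)) * hρx

lemma periodicProfile_succ (m : ℕ) : periodicProfile x k (m + 1) = profile x k (m % (k + 1)) := by
  rw [periodicProfile, show m + 1 + k = m + (k + 1) by ring, Nat.add_mod_right]

lemma periodicProfile_add_two (hk : 1 ≤ k) (m : ℕ) :
    periodicProfile x k (m + 2) = profile x k (m % (k + 1) + 1) := by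
  have hc := Nat.mod_lt m (Nat.add_one_pos k)
  rw [periodicProfile_succ, Nat.add_mod_eq_ite, Nat.mod_eq_of_lt (show 1 < k + 1 by omega)]
  split_ifs with h
  · rw [show m % (k + 1) + 1 - (k + 1) = 0 by omega, show m % (k + 1) = k by omega,
      profile_zero, profile_succ_self]
  · rfl

lemma periodicProfile_of_mod_ne_zero {m : ℕ} (hm : m % (k + 1) ≠ 0) :
    periodicProfile x k m = profile x k (m % (k + 1) - 1) := by
  rw [periodicProfile, Nat.add_mod_eq_ite, Nat.mod_eq_of_lt (k.lt_add_one), if_pos (by omega)]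
  congr 1; omega

lemma periodicProfile_of_mod_eq_zero {m : ℕ} (hm : m % (k + 1) = 0) :
    periodicProfile x k m = x + x ^ k := by
  rw [periodicProfile, Nat.add_mod_eq_ite, Nat.mod_eq_of_lt (k.lt_add_one), hm,
    if_neg (by omega), zero_add, profile_self]

lemma periodicProfile_recurrence (hk : 1 ≤ k) {ρ : ℝ} (hρ : ρ ≠ 0) (hρx : ρ * x = x ^ 2 + 1)
    (hE : (ρ ^ 2 - 1) * (1 + x ^ (k + 1)) = 2 * ρ * (x + x ^ k)) (m : ℕ) :
    periodicProfile x k m + periodicProfile x k (m + 2) +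
        (if m % (k + 1) = 0 then (1 + x ^ (k + 1)) / ρ else 0) =
      ρ * periodicProfile x k (m + 1) := by
  rw [periodicProfile_add_two hk, periodicProfile_succ]
  have hc := Nat.mod_lt m (Nat.add_one_pos k)
  split_ifs with h
  · rw [periodicProfile_of_mod_eq_zero h, h, profile_zero, zero_add, profile_one]
    field_simp
    linear_combination -hE
  · rw [periodicProfile_of_mod_ne_zero h, add_zero]
    exact profile_pred_add_profile_succ hρx (Nat.pos_of_ne_zero h) (by omega)

end Profile

section PathVec
variable (x ρ : ℝ) (k N : ℕ)

noncomputable def pathVec (i : ℕ) : ℝ :=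
  if i = 0 ∨ i = N then (1 + x ^ (k + 1)) / (2 * ρ)
  else if i = 1 ∨ i = N - 1 then (1 + x ^ (k + 1)) / 2
  else periodicProfile x k i

variable {x ρ k N}

lemma pathVec_of_end {i : ℕ} (hi : i = 0 ∨ i = N) :
    pathVec x ρ k N i = (1 + x ^ (k + 1)) / (2 * ρ) := if_pos hi

lemma pathVec_of_near_end (hN : 2 < N) {i : ℕ} (hi : i = 1 ∨ i = N - 1) :
    pathVec x ρ k N i = (1 + x ^ (k + 1)) / 2 := by
  rw [pathVec, if_neg (by omega), if_pos hi]

lemma pathVec_of_interior {i : ℕ} (h2 : 2 ≤ i) (hi : i + 2 ≤ N) :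
    pathVec x ρ k N i = periodicProfile x k i := by
  rw [pathVec, if_neg (by omega), if_neg (by omega)]

lemma pathVec_two (hk : 1 ≤ k) (hN : 4 ≤ N) : pathVec x ρ k N 2 = x + x ^ k := by
  rw [pathVec_of_interior le_rfl hN, periodicProfile_succ 1, Nat.mod_eq_of_lt (by omega),
    profile_one]

lemma pathVec_sub_two (hN : 4 ≤ N) (hNk : (N - 2) % (k + 1) = 0) :
    pathVec x ρ k N (N - 2) = x + x ^ k := by
  rw [pathVec_of_interior (by omega) (by omega), periodicProfile_of_mod_eq_zero hNk]

lemma pathVec_one (hN : 2 < N) (hρ : ρ ≠ 0) : pathVec x ρ k N 1 = ρ * pathVec x ρ k N 0 := by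
  rw [pathVec_of_near_end hN (Or.inl rfl), pathVec_of_end (Or.inl rfl)]
  field_simp

lemma pathVec_two_add_zero (hk : 1 ≤ k) (hN : 4 ≤ N) (hρ : ρ ≠ 0)
    (hE : (ρ ^ 2 - 1) * (1 + x ^ (k + 1)) = 2 * ρ * (x + x ^ k)) :
    pathVec x ρ k N 2 + pathVec x ρ k N 0 = ρ * pathVec x ρ k N 1 := by
  rw [pathVec_two hk hN, pathVec_of_end (Or.inl rfl), pathVec_of_near_end (by omega) (Or.inl rfl)]
  field_simp
  linear_combination -hE

lemma pathVec_of_attach {q : ℕ} (hq : 1 ≤ q) (hN : (k + 1) * q + 3 ≤ N) :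
    pathVec x ρ k N ((k + 1) * q + 1) = 1 + x ^ (k + 1) := by
  have : k + 1 ≤ (k + 1) * q := Nat.le_mul_of_pos_right _ hq
  rw [pathVec_of_interior (by omega) (by omega), periodicProfile_succ, Nat.mul_mod_right,
    profile_zero]

/-- The left-hand side is the neighbour sum at vertex `i` of the main path of the tree, where the
pendant paths at `2` and `N − 2` start with the value `pathVec 1` and each leaf carries
`(1 + x^(k+1))/ρ`. -/
lemma pathVec_recurrence (hk : 1 ≤ k) (hN : 6 ≤ N) (hNk : (N - 2) % (k + 1) = 0) (hρ : ρ ≠ 0)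
    (hρx : ρ * x = x ^ 2 + 1) (hE : (ρ ^ 2 - 1) * (1 + x ^ (k + 1)) = 2 * ρ * (x + x ^ k))
    {i : ℕ} (hi : i ≤ N) :
    (if i < N then pathVec x ρ k N (i + 1) else 0) +
        (if 0 < i then pathVec x ρ k N (i - 1) else 0) +
        (if i = 2 then pathVec x ρ k N 1 else 0) + (if i = N - 2 then pathVec x ρ k N 1 else 0) +
        (if 1 < i ∧ i + 2 < N ∧ (i - 1) % (k + 1) = 0 then (1 + x ^ (k + 1)) / ρ else 0) =
      ρ * pathVec x ρ k N i := by
  have hrec := periodicProfile_recurrence hk hρ hρx hE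
  have hp0 : pathVec x ρ k N N = pathVec x ρ k N 0 := by
    rw [pathVec_of_end (Or.inr rfl), pathVec_of_end (Or.inl rfl)]
  have hp1 : pathVec x ρ k N (N - 1) = pathVec x ρ k N 1 := by
    rw [pathVec_of_near_end (by omega) (Or.inr rfl), pathVec_of_near_end (by omega) (Or.inl rfl)]
  have hp2 : pathVec x ρ k N (N - 2) = pathVec x ρ k N 2 := by
    rw [pathVec_sub_two (by omega) hNk, pathVec_two hk (by omega)]
  have hF : periodicProfile x k 1 = 2 * pathVec x ρ k N 1 := by
    rw [periodicProfile_succ 0, Nat.zero_mod, profile_zero,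
      pathVec_of_near_end (by omega) (Or.inl rfl)]
    ring
  have h1 : 1 % (k + 1) = 1 := Nat.mod_eq_of_lt (by omega)
  rcases (show i = 0 ∨ i = 1 ∨ i = 2 ∨ (3 ≤ i ∧ i + 3 ≤ N) ∨ i = N - 2 ∨ i = N - 1 ∨ i = N by
    omega) with rfl | rfl | rfl | ⟨hi3, hiN⟩ | rfl | rfl | hiN
  all_goals simp (disch := omega) only [if_pos, if_neg, and_false, ite_false, ite_true,
    Nat.reduceAdd, Nat.reduceSub, add_zero, zero_add, Nat.mod_eq_of_lt, one_ne_zero]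
  · exact pathVec_one (by omega) hρ
  · exact pathVec_two_add_zero hk (by omega) hρ hE
  · have h := hrec 1
    simp only [h1, one_ne_zero, if_false, add_zero, hF] at h
    rw [pathVec_of_interior le_rfl (by omega), pathVec_of_interior (by omega) (by omega)]
    linarith
  · obtain ⟨m, rfl⟩ : ∃ m, i = m + 1 := ⟨i - 1, by omega⟩
    simp only [Nat.add_sub_cancel, show 1 < m + 1 by omega, show m + 1 + 2 < N by omega, true_and]
    rw [pathVec_of_interior (by omega) (by omega), pathVec_of_interior (by omega) (by omega),
      pathVec_of_interior (by omega) (by omega), ← hrec m]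
    ring
  · have hN3 : (N - 3) % (k + 1) ≠ 0 := by
      intro h
      have := hNk
      rw [show N - 2 = N - 3 + 1 by omega, Nat.add_mod, h, h1, zero_add, h1] at this
      exact one_ne_zero this
    have h := hrec (N - 3)
    rw [if_neg hN3, add_zero, show N - 3 + 2 = N - 2 + 1 by omega, periodicProfile_succ (N - 2),
      hNk, profile_zero, show N - 3 + 1 = N - 2 by omega] at h
    rw [show N - 2 + 1 = N - 1 by omega, show N - 2 - 1 = N - 3 by omega, hp1,
      pathVec_of_interior (i := N - 3) (by omega) (by omega),
      pathVec_of_interior (i := N - 2) (by omega) (by omega),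
      pathVec_of_near_end (by omega) (Or.inl rfl)]
    linarith
  · rw [show N - 1 + 1 = N by omega, show N - 1 - 1 = N - 2 by omega, hp0, hp1, hp2, add_comm]
    exact pathVec_two_add_zero hk (by omega) hρ hE
  · rw [hiN, hp0, hp1]; exact pathVec_one (by omega) hρ

lemma pathVec_pos {x ρ : ℝ} {k N : ℕ} (hx : 0 < x) (hρ : 0 < ρ) (i : ℕ) :
    0 < pathVec x ρ k N i := by
  unfold pathVec periodicProfile profile
  split_ifs <;> positivity

/-- The paper's `m_{j+2}`: the vertex of the main path carrying the `j`-th single leaf. -/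
def leafPos (ks : ℕ → ℕ) (j : ℕ) : ℕ := 2 + ∑ t ∈ range (j + 1), (ks t + 1)

def treeVec {A B : ℕ} (p : ℕ → ℝ) (c : ℝ) : Fin A ⊕ Fin 2 ⊕ Fin 2 ⊕ Fin B → ℝ
  | .inl i => p i
  | .inr (.inl w) => p (1 - w)
  | .inr (.inr (.inl w)) => p (1 - w)
  | .inr (.inr (.inr _)) => c

lemma sum_fin_ite_val_eq (M a : ℕ) (p : ℕ → ℝ) :
    (∑ x : Fin M, if (x : ℕ) = a then p x else 0) = if a < M then p a else 0 := by
  rw [Fin.sum_univ_eq_sum_range (fun x => if x = a then p x else 0), sum_ite_eq']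
  simp only [mem_range]

lemma sum_fin_ite_path_adj (M : ℕ) (i : Fin M) (p : ℕ → ℝ) :
    (∑ x : Fin M, if ¬i = x ∧ ((i : ℕ) + 1 = x ∨ (x : ℕ) + 1 = i) then p x else 0) =
      (if (i : ℕ) + 1 < M then p (i + 1) else 0) + if 0 < (i : ℕ) then p (i - 1) else 0 := by
  have hsplit : ∀ x : Fin M, (if ¬i = x ∧ ((i : ℕ) + 1 = x ∨ (x : ℕ) + 1 = i) then p x else 0) =
      (if (x : ℕ) = i + 1 then p x else 0) + if (x : ℕ) + 1 = i then p x else 0 := fun x => by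
    simp only [Fin.ext_iff]; split_ifs <;> (try simp) <;> omega
  rw [sum_congr rfl fun x _ => hsplit x, sum_add_distrib, sum_fin_ite_val_eq]
  obtain ⟨_ | m, hi⟩ := i
  · simp
  · simp only [Nat.add_right_cancel_iff]
    rw [sum_fin_ite_val_eq]
    simp [show m < M by omega]

section treeT
variable {n e : ℕ} {ks : ℕ → ℕ} (p : ℕ → ℝ) (c : ℝ)

lemma treeT_mulVec_treeVec_inl (i : Fin (n - e + 1)) :
    (adjM (treeT n e ks) *ᵥ treeVec p c) (.inl i) =
      (if (i : ℕ) < n - e then p (i + 1) else 0) + (if 0 < (i : ℕ) then p (i - 1) else 0) +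
      (if (i : ℕ) = 2 then p 1 else 0) + (if (i : ℕ) = n - e - 2 then p 1 else 0) +
      #{j : Fin (e - 5) | (i : ℕ) = leafPos ks j} * c := by
  rw [adjM_mulVec_apply]
  simp only [Fintype.sum_sum_type, treeT, treeVec, SimpleGraph.fromRel_adj, ne_eq,
    Sum.inl.injEq, reduceCtorEq, not_false_eq_true, true_and, or_false]
  rw [sum_fin_ite_path_adj, Fin.sum_univ_two, Fin.sum_univ_two, ← sum_filter, sum_const,
    nsmul_eq_mul]
  simp [leafPos, add_assoc]
  -- the two filters differ only in their decidability instances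
  exact Or.inl (by congr)

lemma treeT_mulVec_treeVec_pendant_zero (h : 2 ≤ n - e) :
    (adjM (treeT n e ks) *ᵥ treeVec p c) (.inr (.inl 0)) = p 2 + p 0 := by
  rw [adjM_mulVec_apply]
  simp [Fintype.sum_sum_type, treeT, treeVec, sum_fin_ite_val_eq]
  exact fun h' => absurd h (by omega)

lemma treeT_mulVec_treeVec_pendant_one :
    (adjM (treeT n e ks) *ᵥ treeVec p c) (.inr (.inl 1)) = p 1 := by
  rw [adjM_mulVec_apply]
  simp [Fintype.sum_sum_type, treeT, treeVec]

lemma treeT_mulVec_treeVec_pendant'_zero :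
    (adjM (treeT n e ks) *ᵥ treeVec p c) (.inr (.inr (.inl 0))) = p (n - e - 2) + p 0 := by
  rw [adjM_mulVec_apply]
  simp [Fintype.sum_sum_type, treeT, treeVec, sum_fin_ite_val_eq]

lemma treeT_mulVec_treeVec_pendant'_one :
    (adjM (treeT n e ks) *ᵥ treeVec p c) (.inr (.inr (.inl 1))) = p 1 := by
  rw [adjM_mulVec_apply]
  simp [Fintype.sum_sum_type, treeT, treeVec]

lemma treeT_mulVec_treeVec_leaf (j : Fin (e - 5)) (h : leafPos ks j ≤ n - e) :
    (adjM (treeT n e ks) *ᵥ treeVec p c) (.inr (.inr (.inr j))) = p (leafPos ks j) := by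
  unfold leafPos at h
  rw [adjM_mulVec_apply]
  simp [Fintype.sum_sum_type, treeT, treeVec, sum_fin_ite_val_eq, leafPos]
  omega

end treeT

lemma card_leafPos_eq {e r k : ℕ} {ks : ℕ → ℕ} (hk : 1 ≤ k) (he : e - 5 = r - 1)
    (hks : ∀ j < r - 1, leafPos ks j = 1 + (k + 1) * (j + 1)) (i : ℕ) :
    #{j : Fin (e - 5) | i = leafPos ks j} =
      if 1 < i ∧ i + 2 < r * (k + 1) + 2 ∧ (i - 1) % (k + 1) = 0 then 1 else 0 := by
  split_ifs with h
  · obtain ⟨h1, h2, h3⟩ := h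
    set q := (i - 1) / (k + 1)
    have hq : i - 1 = (k + 1) * q := by rw [← Nat.div_add_mod (i - 1) (k + 1), h3, add_zero]
    have hq0 : 0 < q := by
      rcases Nat.eq_zero_or_pos q with h | h
      · rw [h] at hq; omega
      · exact h
    have hqr : q - 1 < e - 5 := by
      have : (k + 1) * q < (k + 1) * r := by rw [Nat.mul_comm (k + 1) r]; omega
      have := Nat.lt_of_mul_lt_mul_left this
      omega
    rw [card_eq_one]
    refine ⟨⟨q - 1, hqr⟩, eq_singleton_iff_unique_mem.2 ⟨?_, fun j hj => ?_⟩⟩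
    · simp only [mem_filter, mem_univ, true_and]
      rw [hks _ (by omega), Nat.sub_add_cancel hq0]
      omega
    · simp only [mem_filter, mem_univ, true_and] at hj
      rw [hks _ (by omega)] at hj
      have : (k + 1) * q = (k + 1) * (j + 1) := by omega
      have := Nat.eq_of_mul_eq_mul_left (by omega) this
      ext; simp only; omega
  · rw [card_eq_zero, filter_eq_empty_iff]
    intro j _ hj
    have hj' : (j : ℕ) < r - 1 := he ▸ j.isLt
    have hr : r * (k + 1) = (k + 1) * (r - 1) + (k + 1) := by
      obtain ⟨s, rfl⟩ : ∃ s, r = s + 1 := ⟨r - 1, by omega⟩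
      simp [Nat.mul_comm, Nat.mul_succ]
    rw [hks _ hj'] at hj
    have : (k + 1) * ((j : ℕ) + 1) ≤ (k + 1) * (r - 1) := Nat.mul_le_mul_left _ hj'
    have : 1 ≤ (k + 1) * ((j : ℕ) + 1) := Nat.one_le_iff_ne_zero.2 (by positivity)
    refine h ⟨by omega, by omega, ?_⟩
    rw [hj, Nat.add_sub_cancel_left, Nat.mul_mod_right]

lemma leafPos_succ (ks : ℕ → ℕ) (j : ℕ) : leafPos ks (j + 1) = leafPos ks j + ks (j + 1) + 1 := by
  simp only [leafPos, sum_range_succ _ (j + 1)]; ring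

lemma leafPos_of_ends_pred {r k : ℕ} (hk : 1 ≤ k) {j : ℕ} (hj : j < r - 1) :
    leafPos (fun t => if t = 0 ∨ t = r - 1 then k - 1 else k) j = 1 + (k + 1) * (j + 1) := by
  induction j with
  | zero => simp [leafPos]; omega
  | succ j ih =>
    rw [leafPos_succ, ih (by omega), if_neg (by omega)]
    ring

lemma treeVec_pos {A B : ℕ} {p : ℕ → ℝ} {c : ℝ} (hp : ∀ i, 0 < p i) (hc : 0 < c)
    (v : Fin A ⊕ Fin 2 ⊕ Fin 2 ⊕ Fin B) : 0 < treeVec p c v := by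
  rcases v with i | w | w | j
  exacts [hp _, hp _, hp _, hc]

lemma treeT_mulVec_treeVec_pathVec {n e r k : ℕ} {ks : ℕ → ℕ} (hk : 1 ≤ k) (hr : 2 ≤ r)
    (hN : n - e = r * (k + 1) + 2) (he : e - 5 = r - 1)
    (hks : ∀ j < r - 1, leafPos ks j = 1 + (k + 1) * (j + 1)) {x ρ : ℝ} (hρ : ρ ≠ 0)
    (hρx : ρ * x = x ^ 2 + 1) (hE : (ρ ^ 2 - 1) * (1 + x ^ (k + 1)) = 2 * ρ * (x + x ^ k)) :
    adjM (treeT n e ks) *ᵥ treeVec (pathVec x ρ k (n - e)) ((1 + x ^ (k + 1)) / ρ) =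
      ρ • treeVec (pathVec x ρ k (n - e)) ((1 + x ^ (k + 1)) / ρ) := by
  have hN6 : 6 ≤ n - e := by nlinarith
  have hNk : (n - e - 2) % (k + 1) = 0 := by rw [hN, Nat.add_sub_cancel, Nat.mul_mod_left]
  funext v
  rw [Pi.smul_apply, smul_eq_mul]
  rcases v with i | w | w | j
  · rw [treeT_mulVec_treeVec_inl, card_leafPos_eq hk he hks, ← hN]
    convert pathVec_recurrence hk hN6 hNk hρ hρx hE i.is_le using 2
    · split_ifs <;> simp
    · rfl
  · revert w
    rw [Fin.forall_fin_two]
    refine ⟨?_, ?_⟩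
    · rw [treeT_mulVec_treeVec_pendant_zero _ _ (by omega)]
      exact pathVec_two_add_zero (N := n - e) hk (by omega) hρ hE
    · rw [treeT_mulVec_treeVec_pendant_one]
      exact pathVec_one (N := n - e) (by omega) hρ
  · revert w
    rw [Fin.forall_fin_two]
    refine ⟨?_, ?_⟩
    · rw [treeT_mulVec_treeVec_pendant'_zero, pathVec_sub_two (by omega) hNk,
        ← pathVec_two (ρ := ρ) (N := n - e) hk (by omega)]
      exact pathVec_two_add_zero (N := n - e) hk (by omega) hρ hE
    · rw [treeT_mulVec_treeVec_pendant'_one]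
      exact pathVec_one (N := n - e) (by omega) hρ
  · have hj : (j : ℕ) < r - 1 := he ▸ j.isLt
    have hpos : leafPos ks j = (k + 1) * (j + 1) + 1 := by rw [hks _ hj]; ring
    have hle : (k + 1) * (j + 1) + (k + 1) ≤ r * (k + 1) := by
      rw [← Nat.mul_succ, Nat.mul_comm r]; exact Nat.mul_le_mul_left _ (by omega)
    rw [treeT_mulVec_treeVec_leaf _ _ _ (by omega), hpos,
      pathVec_of_attach (q := j + 1) (by omega) (by omega)]
    simp only [treeVec]
    field_simp

theorem specRad_treeT_eq {n e r k : ℕ} {ks : ℕ → ℕ} (hk : 1 ≤ k) (hr : 2 ≤ r)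
    (hN : n - e = r * (k + 1) + 2) (he : e - 5 = r - 1)
    (hks : ∀ j < r - 1, leafPos ks j = 1 + (k + 1) * (j + 1)) {x ρ : ℝ} (hx : 0 < x)
    (hρx : ρ * x = x ^ 2 + 1) (hE : (ρ ^ 2 - 1) * (1 + x ^ (k + 1)) = 2 * ρ * (x + x ^ k)) :
    specRad (treeT n e ks) = ρ := by
  have hρ : 0 < ρ := by nlinarith
  have : Nonempty (Fin (n - e + 1) ⊕ Fin 2 ⊕ Fin 2 ⊕ Fin (e - 5)) := ⟨.inr (.inl 0)⟩
  exact specRad_eq_of_pos_eigenvector _ (treeVec_pos (pathVec_pos hx hρ) (by positivity))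
    (treeT_mulVec_treeVec_pathVec hk hr hN he hks hρ.ne' hρx hE)

/-- Lemma 2.13: the equation `d_2 = 2x_1^k/(1 − x_1^{k+1})` has a unique root `ρ_k` in
`(√(2+√5), ∞)`, and for every `r ≥ 2`, the spectral radius of `T_{(k−1,k,…,k,k−1)}`
(with `r` parameters, so `e = r + 4` and `n = r(k+2) + 6`) equals `ρ_k`. -/
theorem specRad_special_tree (k : ℕ) (hk : 1 ≤ k) :
    ∃ ρk : ℝ,
      (Real.sqrt (2 + Real.sqrt 5) < ρk ∧
        d2f ρk = 2 * x1 ρk ^ k / (1 - x1 ρk ^ (k + 1))) ∧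
      (∀ x : ℝ, Real.sqrt (2 + Real.sqrt 5) < x →
        d2f x = 2 * x1 x ^ k / (1 - x1 x ^ (k + 1)) → x = ρk) ∧
      (∀ r : ℕ, 2 ≤ r →
        specRad (treeT (r * (k + 2) + 6) (r + 4)
          (fun t => if t = 0 ∨ t = r - 1 then k - 1 else k)) = ρk) := by
  obtain ⟨ρ, hρ, hroot⟩ := exists_d2f_eq_rootRhs k
  have hρ2 : 2 < ρ := two_lt_sqrt_two_add_sqrt_five.trans hρ
  refine ⟨ρ, ⟨hρ, hroot⟩, fun y hy hyroot => ?_, fun r hr => ?_⟩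
  · have hy2 : 2 < y := two_lt_sqrt_two_add_sqrt_five.trans hy
    refine (d2f_sub_rootRhs_strictMonoOn k).injOn hy2 hρ2 ?_
    rw [hroot, sub_self, sub_eq_zero]
    exact hyroot
  · have hn : r * (k + 2) = r * (k + 1) + r := by ring
    exact specRad_treeT_eq hk hr (by omega) (by omega) (fun j hj => leafPos_of_ends_pred hk hj)
      (x1_pos hρ2) (mul_x1 hρ2.le) (sq_sub_one_mul_eq_of_d2f_eq_rootRhs hρ2 hroot)
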